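/- Let A be a real m × n matrix, b ∈ ℝ^m, μ > 0, λ > 0 and θ > 0, and define the capped ℓ₁-regularized least squares objective F : ℝ^n → ℝ by F(x) := μ‖Ax − b‖² + λ·Σ_{i=1}^n min(|x_i|, θ). Then for every local minimizer x̄ of F there exist constants c > 0, ε > 0 and η > 0 such that for every x ∈ ℝ^n with ‖x − x̄‖ < ε and F(x̄) < F(x) < F(x̄) + η, every Fréchet subgradient ξ of F at x satisfies ‖ξ‖ ≥ c·(F(x) − F(x̄))^{1/2}. -/

import Mathlib

open scoped RealInnerProductSpace Topology

/-- `ξ` is a Fréchet subgradient of `F` at `x`: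
`liminf_{y → x, y ≠ x} (F y − F x − ⟪ξ, y − x⟫)/‖y − x‖ ≥ 0`. -/
def IsFrechetSubgradient {n : ℕ} (F : EuclideanSpace ℝ (Fin n) → ℝ)
    (x ξ : EuclideanSpace ℝ (Fin n)) : Prop :=
  0 ≤ Filter.liminf (fun y => (F y - F x - ⟪ξ, y - x⟫) / ‖y - x‖) (𝓝[≠] x)

/-!
Near a local minimizer `x̄` every coordinate stays on the piece of `s ↦ min |s| θ` containing
`x̄ᵢ`; in particular `|x̄ᵢ| ≠ θ`, since the cap has a concave kink there. Write `g` for the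
gradient of the quadratic part at `x̄`, `Δ = x - x̄`, and `dᵢ = gᵢ + λ sign xᵢ` if `x̄ᵢ = 0`,
`dᵢ = 0` otherwise. The first-order conditions at `x̄` give `F x - F x̄ = μ‖AΔ‖² + Σ dᵢ xᵢ`, and
`ξᵢ = 2μ (AᵀAΔ)ᵢ + dᵢ` whenever `xᵢ ≠ 0`. If `dᵢ ≠ 0` for such an `i`, then `|dᵢ|` is one of the
finitely many nonzero numbers `|gᵢ ± λ|`, while `(AᵀAΔ)ᵢ` is small, so `‖ξ‖` is bounded below.
Otherwise the gap is `μ‖AΔ‖²`, `Δ` is supported on `S = {i | xᵢ ≠ 0}`, and `ξ` restricted to `S`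
is `2μ P_S AᵀAΔ`, whose norm dominates `‖AΔ‖` uniformly in `S` because the adjoint of `A P_S` is
injective on the range of `A P_S`.
-/

open Filter Topology Finset Matrix

theorem Filter.liminf_le_of_tendsto_comp {α β : Type*} {f : Filter α} {g : Filter β} [g.NeBot]
    {u : α → ℝ} {p : β → α} {l : ℝ} (hu : IsBoundedUnder (· ≥ ·) f u) (hp : Tendsto p g f)
    (hl : Tendsto (u ∘ p) g (𝓝 l)) : liminf u f ≤ l := by
  have hcobdd : IsCoboundedUnder (· ≥ ·) (map p g) u :=
    (isBoundedUnder_of_eventually_le (hl.eventually_le_const (lt_add_one l))).isCoboundedUnder_ge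
  calc liminf u f ≤ liminf u (map p g) := liminf_le_liminf_of_le hp hu hcobdd
    _ = l := by rw [← liminf_comp, hl.liminf_eq]

section Frechet

variable {n : ℕ} {F : EuclideanSpace ℝ (Fin n) → ℝ} {x ξ w : EuclideanSpace ℝ (Fin n)} {d : ℝ}

noncomputable def frechetQuotient (F : EuclideanSpace ℝ (Fin n) → ℝ)
    (x ξ y : EuclideanSpace ℝ (Fin n)) : ℝ :=
  (F y - F x - ⟪ξ, y - x⟫) / ‖y - x‖

-- `Filter.liminf` in `ℝ` is the junk value `0` for a function not eventually bounded below.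
theorem IsFrechetSubgradient.inner_le_of_hasDerivAt (h : IsFrechetSubgradient F x ξ)
    (hbdd : IsBoundedUnder (· ≥ ·) (𝓝[≠] x) (frechetQuotient F x ξ))
    (hw : ‖w‖ = 1) (hd : HasDerivAt (fun t : ℝ => F (x + t • w)) d 0) : ⟪ξ, w⟫ ≤ d := by
  have hw0 : w ≠ 0 := norm_ne_zero_iff.mp (by simp [hw])
  have hpath : Tendsto (fun t : ℝ => x + t • w) (𝓝[>] 0) (𝓝[≠] x) := by
    refine tendsto_nhdsWithin_iff.mpr ⟨?_, ?_⟩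
    · exact (Continuous.tendsto' (by fun_prop) 0 x (by simp)).mono_left nhdsWithin_le_nhds
    · filter_upwards [self_mem_nhdsWithin] with t (ht : 0 < t)
      simpa [ht.ne'] using hw0
  have hslope := hd.tendsto_slope_zero_right.sub_const ⟪ξ, w⟫
  refine sub_nonneg.mp (h.trans (liminf_le_of_tendsto_comp hbdd hpath (hslope.congr' ?_)))
  filter_upwards [self_mem_nhdsWithin] with t (ht : 0 < t)
  simp [norm_smul, hw, abs_of_pos ht, real_inner_smul_right, div_eq_inv_mul, mul_sub, ht.ne']

theorem IsFrechetSubgradient.inner_eq_of_hasDerivAt (h : IsFrechetSubgradient F x ξ)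
    (hbdd : IsBoundedUnder (· ≥ ·) (𝓝[≠] x) (frechetQuotient F x ξ))
    (hw : ‖w‖ = 1) (hd : HasDerivAt (fun t : ℝ => F (x + t • w)) d 0) : ⟪ξ, w⟫ = d := by
  have hd' : HasDerivAt (fun t : ℝ => F (x + t • -w)) (-d) 0 := by
    have := hd.comp_of_eq (0 : ℝ) (hasDerivAt_neg 0) neg_zero.symm
    simpa [Function.comp_def] using this
  have := h.inner_le_of_hasDerivAt hbdd (by rwa [norm_neg]) hd'
  rw [inner_neg_right] at this
  linarith [h.inner_le_of_hasDerivAt hbdd hw hd]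

theorem isBoundedUnder_frechetQuotient {K : ℝ} (hK : ∀ y, -(K * ‖y - x‖) ≤ F y - F x) :
    IsBoundedUnder (· ≥ ·) (𝓝[≠] x) (frechetQuotient F x ξ) := by
  refine isBoundedUnder_of_eventually_ge (a := -(K + ‖ξ‖)) ?_
  filter_upwards [self_mem_nhdsWithin] with y (hy : y ≠ x)
  have hpos : 0 < ‖y - x‖ := norm_pos_iff.mpr (sub_ne_zero.mpr hy)
  rw [frechetQuotient, le_div_iff₀ hpos]
  nlinarith [hK y, real_inner_le_norm ξ (y - x)]

end Frechet

section Cap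

variable {θ : ℝ}

noncomputable def capSlope (θ a : ℝ) : ℝ := if |a| < θ then SignType.sign a else 0

theorem eventually_capSlope_eq_and_min_abs_eq {a : ℝ} (ha : a ≠ 0) (haθ : |a| ≠ θ) :
    ∀ᶠ s in 𝓝 a, capSlope θ s = capSlope θ a ∧ min |s| θ = min |a| θ + capSlope θ a * (s - a) := by
  have habs : Tendsto (fun s : ℝ => |s|) (𝓝 a) (𝓝 |a|) := continuous_abs.tendsto a
  rcases haθ.lt_or_gt with hlt | hgt
  · have hsign : ∀ᶠ s in 𝓝 a, SignType.sign s = SignType.sign a := by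
      rcases ha.lt_or_gt with hneg | hpos
      · filter_upwards [eventually_lt_nhds hneg] with s hs using by rw [sign_neg hs, sign_neg hneg]
      · filter_upwards [eventually_gt_nhds hpos] with s hs using by rw [sign_pos hs, sign_pos hpos]
    filter_upwards [hsign, habs.eventually (eventually_lt_nhds hlt)] with s hs hsθ
    simp only [capSlope, if_pos hsθ, if_pos hlt, min_eq_left hsθ.le, min_eq_left hlt.le, hs,
      true_and]
    rw [← sign_mul_self s, ← sign_mul_self a, hs]
    ring
  · filter_upwards [habs.eventually (eventually_gt_nhds hgt)] with s hsθ
    simp [capSlope, not_lt.mpr hsθ.le, not_lt.mpr hgt.le, min_eq_right hsθ.le, min_eq_right hgt.le]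

theorem hasDerivAt_min_abs {a : ℝ} (ha : a ≠ 0) (haθ : |a| ≠ θ) :
    HasDerivAt (fun s => min |s| θ) (capSlope θ a) a := by
  have hlin : HasDerivAt (fun s => min |a| θ + capSlope θ a * (s - a)) (capSlope θ a) a := by
    simpa using ((hasDerivAt_id a).sub_const a).const_mul (capSlope θ a) |>.const_add (min |a| θ)
  exact hlin.congr_of_eventuallyEq
    ((eventually_capSlope_eq_and_min_abs_eq ha haθ).mono fun _ hs => hs.2)

theorem min_abs_add_add_min_abs_sub {a t : ℝ} (ha : |a| = θ) (ht : |t| ≤ θ) :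
    min |a + t| θ + min |a - t| θ = 2 * θ - |t| := by
  have hθ : 0 ≤ θ := ha ▸ abs_nonneg a
  rcases (abs_eq hθ).mp ha with rfl | rfl <;> rcases abs_cases t with ⟨ht', _⟩ | ⟨ht', _⟩ <;>
    rw [abs_le] at ht <;> simp only [abs_eq_max_neg, min_def, max_def] <;> split_ifs <;> linarith

theorem abs_min_abs_sub_min_abs_le (u v : ℝ) : |min |u| θ - min |v| θ| ≤ |u - v| := by
  simpa using (abs_min_sub_min_le_max |u| θ |v| θ).trans_eq (by simp) |>.trans
    (abs_abs_sub_abs_le_abs_sub u v)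

-- The scalar content of the linearization: `g = gᵢ`, `a = x̄ᵢ`, `s = xᵢ`, and the `if` is `dᵢ`.
theorem eventually_capped_linearization {g lam a : ℝ} (hθ : 0 < θ)
    (ha : a ≠ 0 → |a| ≠ θ ∧ g + lam * capSlope θ a = 0) :
    ∀ᶠ s in 𝓝 a, (s = 0 → a = 0) ∧
      (s ≠ 0 → |s| ≠ θ ∧
        g + lam * capSlope θ s = if a = 0 then g + lam * SignType.sign s else 0) ∧
      g * (s - a) + lam * (min |s| θ - min |a| θ) =
        (if a = 0 then g + lam * SignType.sign s else 0) * s := by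
  by_cases ha0 : a = 0
  · subst ha0
    have hsmall : ∀ᶠ s in 𝓝 (0 : ℝ), |s| < θ := by
      simpa using (continuous_abs.tendsto (0 : ℝ)).eventually (eventually_lt_nhds (by simpa))
    filter_upwards [hsmall] with s hs
    refine ⟨fun _ => rfl, fun _ => ⟨hs.ne, by simp [capSlope, hs]⟩, ?_⟩
    simp only [if_true, abs_zero, min_eq_left hθ.le, min_eq_left hs.le]
    rw [← sign_mul_self s]
    ring
  · obtain ⟨haθ, hcrit⟩ := ha ha0
    filter_upwards [eventually_capSlope_eq_and_min_abs_eq ha0 haθ, eventually_ne_nhds ha0,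
      (continuous_abs.tendsto a).eventually (eventually_ne_nhds haθ)] with s ⟨hslope, hmin⟩ hs hsθ
    refine ⟨fun h => absurd h hs, fun _ => ⟨hsθ, by rw [if_neg ha0, hslope, hcrit]⟩, ?_⟩
    rw [if_neg ha0, hmin, zero_mul, ← mul_zero (s - a), ← hcrit]
    ring

end Cap

section CappedLS

variable {m n : ℕ} (A : Matrix (Fin m) (Fin n) ℝ) (b : Fin m → ℝ) (μ lam θ : ℝ)

def cappedLS (x : EuclideanSpace ℝ (Fin n)) : ℝ :=
  μ * ∑ j, (A *ᵥ x - b) j ^ 2 + lam * ∑ i, min |x i| θ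

def lsGrad (x : EuclideanSpace ℝ (Fin n)) : Fin n → ℝ := (2 * μ) • ((A *ᵥ x - b) ᵥ* A)

theorem lsGrad_sub_lsGrad (x y : EuclideanSpace ℝ (Fin n)) :
    lsGrad A b μ y - lsGrad A b μ x = (2 * μ) • ((A *ᵥ (y - x)) ᵥ* A) := by
  simp only [lsGrad, mulVec_sub, ← smul_sub, ← sub_vecMul]
  congr 2
  abel

theorem cappedLS_sub_cappedLS (x y : EuclideanSpace ℝ (Fin n)) :
    cappedLS A b μ lam θ y - cappedLS A b μ lam θ x =
      μ * ∑ j, (A *ᵥ (y - x)) j ^ 2 +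
        ∑ i, (lsGrad A b μ x i * (y i - x i) + lam * (min |y i| θ - min |x i| θ)) := by
  set r := A *ᵥ x - b
  set d := A *ᵥ (y - x)
  have hres : A *ᵥ y - b = r + d := by simp only [r, d, mulVec_sub]; abel
  have hcross : ∑ j, r j * d j = ∑ i, (r ᵥ* A) i * (y i - x i) := by
    simpa [dotProduct] using dotProduct_mulVec r A (y - x)
  have hsq : ∑ j, (A *ᵥ y - b) j ^ 2 = ∑ j, r j ^ 2 + ∑ j, d j ^ 2 + 2 * ∑ j, r j * d j := by
    simp only [hres, Pi.add_apply, add_sq, sum_add_distrib, mul_sum, mul_assoc]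
    ring
  simp only [cappedLS, hsq, hcross, sum_add_distrib, ← mul_sum, sum_sub_distrib, lsGrad,
    Pi.smul_apply, smul_eq_mul, mul_assoc]
  ring

theorem cappedLS_add_smul_single (x : EuclideanSpace ℝ (Fin n)) (i : Fin n) (t : ℝ) :
    cappedLS A b μ lam θ (x + t • EuclideanSpace.single i 1) =
      cappedLS A b μ lam θ x + (μ * ∑ j, A j i ^ 2) * t ^ 2 + lsGrad A b μ x i * t +
        lam * (min |x i + t| θ - min |x i| θ) := by
  have hcol : A *ᵥ ((x + t • EuclideanSpace.single i 1).ofLp - x.ofLp) = fun j => t * A j i := by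
    ext j
    simp [mulVec, dotProduct, Pi.single_apply, mul_comm]
  have hcoord : ∀ k ≠ i, (x + t • EuclideanSpace.single i (1 : ℝ)) k = x k := fun k hk => by
    simp [hk]
  have h := cappedLS_sub_cappedLS A b μ lam θ x (x + t • EuclideanSpace.single i 1)
  rw [hcol, sum_eq_single i (fun k _ hk => by simp [hcoord k hk]) (by simp)] at h
  simp only [mul_pow, ← mul_sum] at h
  simp at h
  linarith

end CappedLS

section CappedLSLocal

variable {m n : ℕ} (A : Matrix (Fin m) (Fin n) ℝ) (b : Fin m → ℝ) {μ lam θ : ℝ}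

theorem hasDerivAt_cappedLS_add_smul_single {x : EuclideanSpace ℝ (Fin n)} {i : Fin n} {d : ℝ}
    (hd : HasDerivAt (fun s => min |s| θ) d (x i)) :
    HasDerivAt (fun t : ℝ => cappedLS A b μ lam θ (x + t • EuclideanSpace.single i 1))
      (lsGrad A b μ x i + lam * d) 0 := by
  simp_rw [cappedLS_add_smul_single]
  have hcap : HasDerivAt (fun t => min |x i + t| θ - min |x i| θ) d 0 := by
    simpa using (HasDerivAt.comp_const_add (x i) 0 (by rwa [add_zero])).sub_const (min |x i| θ)
  have hquad : HasDerivAt (fun t : ℝ => (μ * ∑ j, A j i ^ 2) * t ^ 2) 0 0 := by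
    simpa using (hasDerivAt_pow 2 (0 : ℝ)).const_mul (μ * ∑ j, A j i ^ 2)
  have h := ((hquad.const_add (cappedLS A b μ lam θ x)).fun_add
    ((hasDerivAt_id (0 : ℝ)).const_mul (lsGrad A b μ x i))).fun_add (hcap.const_mul lam)
  simpa only [id, mul_one, zero_add] using h

theorem neg_mul_norm_le_cappedLS_sub (hμ : 0 ≤ μ) (hlam : 0 ≤ lam)
    (x y : EuclideanSpace ℝ (Fin n)) :
    -((∑ i, (|lsGrad A b μ x i| + lam)) * ‖y - x‖) ≤
      cappedLS A b μ lam θ y - cappedLS A b μ lam θ x := by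
  rw [cappedLS_sub_cappedLS, sum_mul, ← sum_neg_distrib]
  have hterm : ∀ i, -((|lsGrad A b μ x i| + lam) * ‖y - x‖) ≤
      lsGrad A b μ x i * (y i - x i) + lam * (min |y i| θ - min |x i| θ) := by
    intro i
    have hcoord : |y i - x i| ≤ ‖y - x‖ := by simpa using PiLp.norm_apply_le (y - x) i
    have hcap := abs_min_abs_sub_min_abs_le (θ := θ) (y i) (x i)
    have h1 := neg_abs_le (lsGrad A b μ x i * (y i - x i))
    have h2 := neg_abs_le (min |y i| θ - min |x i| θ)
    rw [abs_mul] at h1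
    nlinarith [abs_nonneg (lsGrad A b μ x i)]
  have hquad : 0 ≤ μ * ∑ j, (A *ᵥ (y - x)) j ^ 2 := by positivity
  linarith [sum_le_sum fun i (_ : i ∈ univ) => hterm i]

theorem IsFrechetSubgradient.cappedLS_apply (hμ : 0 ≤ μ) (hlam : 0 ≤ lam)
    {x ξ : EuclideanSpace ℝ (Fin n)} (hξ : IsFrechetSubgradient (cappedLS A b μ lam θ) x ξ)
    {i : Fin n} {d : ℝ} (hd : HasDerivAt (fun s => min |s| θ) d (x i)) :
    ξ i = lsGrad A b μ x i + lam * d := by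
  have h := hξ.inner_eq_of_hasDerivAt
    (isBoundedUnder_frechetQuotient (neg_mul_norm_le_cappedLS_sub A b hμ hlam x))
    (by simp) (hasDerivAt_cappedLS_add_smul_single A b hd)
  simpa [EuclideanSpace.inner_single_right] using h

theorem isLocalMin_cappedLS_slice {x : EuclideanSpace ℝ (Fin n)}
    (hmin : IsLocalMin (cappedLS A b μ lam θ) x) (i : Fin n) :
    IsLocalMin (fun t : ℝ => cappedLS A b μ lam θ (x + t • EuclideanSpace.single i 1)) 0 :=
  IsLocalMin.comp_continuous (f := cappedLS A b μ lam θ)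
    (g := fun t : ℝ => x + t • EuclideanSpace.single i 1) (b := 0) (by simpa using hmin)
    (by fun_prop)

theorem lsGrad_add_mul_eq_zero_of_isLocalMin {x : EuclideanSpace ℝ (Fin n)}
    (hmin : IsLocalMin (cappedLS A b μ lam θ) x) {i : Fin n} {d : ℝ}
    (hd : HasDerivAt (fun s => min |s| θ) d (x i)) : lsGrad A b μ x i + lam * d = 0 :=
  (isLocalMin_cappedLS_slice A b hmin i).hasDerivAt_eq_zero
    (hasDerivAt_cappedLS_add_smul_single A b hd)

theorem abs_ne_of_isLocalMin_cappedLS (hlam : 0 < lam) (hθ : 0 < θ)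
    {x : EuclideanSpace ℝ (Fin n)}
    (hmin : IsLocalMin (cappedLS A b μ lam θ) x) (i : Fin n) : |x i| ≠ θ := by
  intro hxθ
  set a := μ * ∑ j, A j i ^ 2
  have hslice := isLocalMin_cappedLS_slice A b hmin i
  simp only [IsLocalMin, IsMinFilter, zero_smul, add_zero] at hslice
  have hsmall : ∀ᶠ t in 𝓝 (0 : ℝ), 2 * a * t < lam :=
    (Continuous.tendsto' (by fun_prop) 0 0 (by simp)).eventually (eventually_lt_nhds hlam)
  obtain ⟨t, ⟨hplus, hminus⟩, hat, ht0, htθ⟩ := (((hslice.filter_mono nhdsWithin_le_nhds).and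
    (((continuous_neg.tendsto' 0 0 neg_zero).eventually hslice).filter_mono
      nhdsWithin_le_nhds)).and
    ((hsmall.filter_mono nhdsWithin_le_nhds).and (Ioo_mem_nhdsGT hθ))).exists
  rw [cappedLS_add_smul_single] at hplus hminus
  -- Along `±t` the linear terms cancel, while the kink of the cap at `|x i| = θ` costs `λ|t|`.
  have hkink := min_abs_add_add_min_abs_sub hxθ (abs_of_pos ht0 ▸ htθ.le)
  rw [abs_of_pos ht0, sub_eq_add_neg] at hkink
  rw [hxθ, min_self] at hplus hminus
  nlinarith

end CappedLSLocal

theorem LinearMap.exists_pos_mul_norm_le_norm_adjoint_apply {𝕜 E F : Type*} [RCLike 𝕜]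
    [NormedAddCommGroup E] [InnerProductSpace 𝕜 E] [FiniteDimensional 𝕜 E]
    [NormedAddCommGroup F] [InnerProductSpace 𝕜 F] [FiniteDimensional 𝕜 F] (T : E →ₗ[𝕜] F) :
    ∃ γ > 0, ∀ z, γ * ‖T z‖ ≤ ‖T.adjoint (T z)‖ := by
  -- The adjoint is injective on the range of `T`, as `⟪T† (T z), z⟫ = ‖T z‖²`.
  set R := T.adjoint.domRestrict (LinearMap.range T)
  have hker : LinearMap.ker R = ⊥ := by
    refine LinearMap.ker_eq_bot'.mpr ?_
    rintro ⟨_, z, rfl⟩ hz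
    have h0 : T.adjoint (T z) = 0 := hz
    have : inner 𝕜 (T z) (T z) = 0 := by rw [← LinearMap.adjoint_inner_left, h0, inner_zero_left]
    exact Subtype.ext (by simpa using this)
  obtain ⟨K, hK, hanti⟩ := R.exists_antilipschitzWith hker
  refine ⟨1 / K, by positivity, fun z => ?_⟩
  have h := hanti.le_mul_norm (map_zero R) ⟨T z, LinearMap.mem_range_self T z⟩
  rw [div_mul_eq_mul_div, one_mul, div_le_iff₀ (by positivity), mul_comm]
  simpa [R] using h

theorem Matrix.exists_pos_sq_mul_sum_sq_mulVec_le_sum_sq_vecMul {ι κ : Type*} [Fintype ι]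
    [DecidableEq ι] [Fintype κ] [DecidableEq κ] (A : Matrix κ ι ℝ) :
    ∃ γ > 0, ∀ (S : Finset ι) (z : ι → ℝ), (∀ i ∉ S, z i = 0) →
      γ ^ 2 * ∑ j, (A *ᵥ z) j ^ 2 ≤ ∑ i ∈ S, ((A *ᵥ z) ᵥ* A) i ^ 2 := by
  have hS : ∀ S : Finset ι, ∀ᶠ γ in 𝓝[>] (0 : ℝ), ∀ z : ι → ℝ, (∀ i ∉ S, z i = 0) →
      γ ^ 2 * ∑ j, (A *ᵥ z) j ^ 2 ≤ ∑ i ∈ S, ((A *ᵥ z) ᵥ* A) i ^ 2 := by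
    intro S
    set D : Matrix ι ι ℝ := diagonal fun i => if i ∈ S then 1 else 0
    obtain ⟨γ₀, hγ₀, hT⟩ := (toEuclideanLin (A * D)).exists_pos_mul_norm_le_norm_adjoint_apply
    filter_upwards [Ioo_mem_nhdsGT hγ₀] with γ ⟨hγ, hγγ₀⟩ z hz
    have hDz : D *ᵥ z = z := by
      ext i
      by_cases hi : i ∈ S <;> simp [D, mulVec_diagonal, hi, hz]
    have h := hT (WithLp.toLp 2 z)
    rw [← toEuclideanLin_conjTranspose_eq_adjoint] at h
    simp only [toEuclideanLin, toLpLin_apply, ← mulVec_mulVec, hDz,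
      conjTranspose_eq_transpose_of_trivial, transpose_mul, D, diagonal_transpose] at h
    have hsq := pow_le_pow_left₀ (by positivity) h 2
    simp only [mul_pow, EuclideanSpace.real_norm_sq_eq, mulVec_diagonal, mulVec_transpose,
      ite_mul, one_mul, zero_mul, ite_pow, zero_pow two_ne_zero, sum_ite_mem, univ_inter] at hsq
    calc γ ^ 2 * ∑ j, (A *ᵥ z) j ^ 2 ≤ γ₀ ^ 2 * ∑ j, (A *ᵥ z) j ^ 2 := by gcongr
      _ ≤ _ := hsq
  obtain ⟨γ, hγall, hγ⟩ := ((eventually_all.mpr hS).and self_mem_nhdsWithin).exists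
  exact ⟨γ, hγ, hγall⟩

theorem exists_pos_le_abs_of_ne_zero {ι : Type*} [Finite ι] (f : ι → ℝ) :
    ∃ α > 0, ∀ i, f i ≠ 0 → α ≤ |f i| := by
  have h : ∀ i, ∀ᶠ α in 𝓝[>] (0 : ℝ), f i ≠ 0 → α ≤ |f i| := by
    intro i
    by_cases hi : f i = 0
    · exact Eventually.of_forall fun _ h => absurd hi h
    · filter_upwards [Ioo_mem_nhdsGT (abs_pos.mpr hi)] with α hα _ using hα.2.le
  obtain ⟨α, hα, hα0⟩ := ((eventually_all.mpr h).and self_mem_nhdsWithin).exists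
  exact ⟨α, hα0, hα⟩

theorem sq_mul_sum_sq_mulVec_le_norm_sq {m n : ℕ} {A : Matrix (Fin m) (Fin n) ℝ} {γ c : ℝ}
    {S : Finset (Fin n)} {z : Fin n → ℝ}
    (hγ : γ ^ 2 * ∑ j, (A *ᵥ z) j ^ 2 ≤ ∑ i ∈ S, ((A *ᵥ z) ᵥ* A) i ^ 2)
    {ξ : EuclideanSpace ℝ (Fin n)} (hξ : ∀ i ∈ S, ξ i = c * ((A *ᵥ z) ᵥ* A) i) :
    c ^ 2 * (γ ^ 2 * ∑ j, (A *ᵥ z) j ^ 2) ≤ ‖ξ‖ ^ 2 :=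
  calc c ^ 2 * (γ ^ 2 * ∑ j, (A *ᵥ z) j ^ 2) ≤ c ^ 2 * ∑ i ∈ S, ((A *ᵥ z) ᵥ* A) i ^ 2 := by
        gcongr
    _ = ∑ i ∈ S, ξ i ^ 2 := by
        rw [mul_sum]
        exact sum_congr rfl fun i hi => by rw [hξ i hi, mul_pow]
    _ ≤ ∑ i, ξ i ^ 2 := sum_le_sum_of_subset_of_nonneg (subset_univ S) fun _ _ _ => sq_nonneg _
    _ = ‖ξ‖ ^ 2 := (EuclideanSpace.real_norm_sq_eq ξ).symm

section KL

variable {m n : ℕ} (A : Matrix (Fin m) (Fin n) ℝ) (b : Fin m → ℝ) {μ lam θ : ℝ}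

theorem eventually_cappedLS_linearization (hlam : 0 < lam) (hθ : 0 < θ)
    {xbar : EuclideanSpace ℝ (Fin n)} (hmin : IsLocalMin (cappedLS A b μ lam θ) xbar) :
    ∀ᶠ x in 𝓝 xbar, ∀ i, (x i = 0 → xbar i = 0) ∧
      (x i ≠ 0 → |x i| ≠ θ ∧ lsGrad A b μ xbar i + lam * capSlope θ (x i) =
        if xbar i = 0 then lsGrad A b μ xbar i + lam * SignType.sign (x i) else 0) ∧
      lsGrad A b μ xbar i * (x i - xbar i) + lam * (min |x i| θ - min |xbar i| θ) =
        (if xbar i = 0 then lsGrad A b μ xbar i + lam * SignType.sign (x i) else 0) * x i := by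
  refine eventually_all.mpr fun i => ?_
  have hcrit : xbar i ≠ 0 → |xbar i| ≠ θ ∧ lsGrad A b μ xbar i + lam * capSlope θ (xbar i) = 0 :=
    fun h0 => have hθ' := abs_ne_of_isLocalMin_cappedLS A b hlam hθ hmin i
      ⟨hθ', lsGrad_add_mul_eq_zero_of_isLocalMin A b hmin (hasDerivAt_min_abs h0 hθ')⟩
  exact ((PiLp.continuous_apply 2 _ i).tendsto xbar).eventually
    (eventually_capped_linearization hθ hcrit)

theorem kl_bound_of_cappedLS_linearization (hμ : 0 < μ) (hlam : 0 < lam) {α γ : ℝ} (hα : 0 < α)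
    (hγA : ∀ (S : Finset (Fin n)) (z : Fin n → ℝ), (∀ i ∉ S, z i = 0) →
      γ ^ 2 * ∑ j, (A *ᵥ z) j ^ 2 ≤ ∑ i ∈ S, ((A *ᵥ z) ᵥ* A) i ^ 2)
    {xbar x ξ : EuclideanSpace ℝ (Fin n)} {dev : Fin n → ℝ}
    (hlin : ∀ i, (x i = 0 → xbar i = 0) ∧
      (x i ≠ 0 → |x i| ≠ θ ∧ lsGrad A b μ xbar i + lam * capSlope θ (x i) = dev i) ∧
      lsGrad A b μ xbar i * (x i - xbar i) + lam * (min |x i| θ - min |xbar i| θ) = dev i * x i)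
    (hdev : ∀ i, dev i ≠ 0 → α ≤ |dev i|)
    (hsmall : ∀ i, |((2 * μ) • ((A *ᵥ (x - xbar)) ᵥ* A)) i| ≤ α / 2)
    (hξ : IsFrechetSubgradient (cappedLS A b μ lam θ) x ξ)
    (hgap : cappedLS A b μ lam θ x - cappedLS A b μ lam θ xbar < 1) :
    min (2 * √μ * γ) (α / 2) * √(cappedLS A b μ lam θ x - cappedLS A b μ lam θ xbar) ≤ ‖ξ‖ := by
  set H : Fin n → ℝ := (2 * μ) • ((A *ᵥ (x - xbar)) ᵥ* A)
  set E := cappedLS A b μ lam θ x - cappedLS A b μ lam θ xbar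
  have hξi : ∀ i, x i ≠ 0 → ξ i = H i + dev i := by
    intro i hi
    obtain ⟨hθi, hdevi⟩ := (hlin i).2.1 hi
    rw [hξ.cappedLS_apply A b hμ.le hlam.le (hasDerivAt_min_abs hi hθi), ← hdevi,
      ← sub_add_cancel (lsGrad A b μ x) (lsGrad A b μ xbar), lsGrad_sub_lsGrad]
    simp only [Pi.add_apply, H]
    ring
  have hE : E = μ * ∑ j, (A *ᵥ (x - xbar)) j ^ 2 + ∑ i, dev i * x i := by
    simp only [E, cappedLS_sub_cappedLS, fun i => (hlin i).2.2]
  by_cases hcase : ∃ i, x i ≠ 0 ∧ dev i ≠ 0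
  · obtain ⟨i, hxi, hdi⟩ := hcase
    have hξα : α / 2 ≤ ‖ξ‖ := by
      have hcoord : |ξ i| ≤ ‖ξ‖ := by simpa using PiLp.norm_apply_le ξ i
      rw [hξi i hxi, add_comm] at hcoord
      linarith [hdev i hdi, hsmall i, abs_sub_abs_le_abs_add (dev i) (H i)]
    calc min (2 * √μ * γ) (α / 2) * √E ≤ α / 2 * 1 :=
          mul_le_mul (min_le_right _ _) (Real.sqrt_le_one.mpr hgap.le) (Real.sqrt_nonneg _)
            (half_pos hα).le
      _ ≤ ‖ξ‖ := by linarith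
  · simp only [not_exists, not_and, not_not] at hcase
    have hdev0 : ∑ i, dev i * x i = 0 := sum_eq_zero fun i _ => by
      by_cases hxi : x i = 0
      · rw [hxi, mul_zero]
      · rw [hcase i hxi, zero_mul]
    have hE' : E = μ * ∑ j, (A *ᵥ (x - xbar)) j ^ 2 := by rw [hE, hdev0, add_zero]
    set S := univ.filter fun i => x i ≠ 0
    have hsupp : ∀ i ∉ S, (x - xbar) i = 0 := by
      intro i hi
      have hxi : x i = 0 := by simpa [S] using hi
      simp [hxi, (hlin i).1 hxi]
    have hsq := sq_mul_sum_sq_mulVec_le_norm_sq (c := 2 * μ) (hγA S _ hsupp) (ξ := ξ)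
      fun i hi => by
        rw [hξi i (mem_filter.mp hi).2, hcase i (mem_filter.mp hi).2, add_zero]
        rfl
    rw [WithLp.ofLp_sub] at hsq
    have hE0 : 0 ≤ E := by rw [hE']; positivity
    refine (mul_le_mul_of_nonneg_right (min_le_left _ _) (Real.sqrt_nonneg _)).trans
      (le_of_pow_le_pow_left₀ two_ne_zero (norm_nonneg ξ) ?_)
    rw [mul_pow, mul_pow, mul_pow, Real.sq_sqrt hμ.le, Real.sq_sqrt hE0, hE']
    linarith

theorem exists_kl_bound_of_isLocalMin_cappedLS (hμ : 0 < μ) (hlam : 0 < lam) (hθ : 0 < θ)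
    {xbar : EuclideanSpace ℝ (Fin n)} (hmin : IsLocalMin (cappedLS A b μ lam θ) xbar) :
    ∃ c > 0, ∀ᶠ x in 𝓝 xbar, ∀ ξ, IsFrechetSubgradient (cappedLS A b μ lam θ) x ξ →
      cappedLS A b μ lam θ x - cappedLS A b μ lam θ xbar < 1 →
      c * √(cappedLS A b μ lam θ x - cappedLS A b μ lam θ xbar) ≤ ‖ξ‖ := by
  obtain ⟨α, hα, hαdev⟩ := exists_pos_le_abs_of_ne_zero
    fun p : Fin n × SignType => lsGrad A b μ xbar p.1 + lam * p.2
  obtain ⟨γ, hγ, hγA⟩ := A.exists_pos_sq_mul_sum_sq_mulVec_le_sum_sq_vecMul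
  have hsmall : ∀ᶠ x : EuclideanSpace ℝ (Fin n) in 𝓝 xbar,
      ∀ i, |((2 * μ) • ((A *ᵥ (x - xbar)) ᵥ* A)) i| ≤ α / 2 := by
    refine eventually_all.mpr fun i => ?_
    have hcont : Continuous fun x : EuclideanSpace ℝ (Fin n) =>
        |((2 * μ) • ((A *ᵥ (x - xbar)) ᵥ* A)) i| := by
      fun_prop
    exact (hcont.tendsto' xbar 0 (by simp)).eventually (eventually_le_nhds (half_pos hα))
  refine ⟨min (2 * √μ * γ) (α / 2), by positivity, ?_⟩
  filter_upwards [eventually_cappedLS_linearization A b hlam hθ hmin, hsmall]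
    with x hlin hx ξ hξ hgap
  refine kl_bound_of_cappedLS_linearization A b hμ hlam hα hγA hlin (fun i hi => ?_) hx hξ hgap
  split_ifs at hi ⊢
  · exact hαdev (i, SignType.sign (x i)) hi
  · exact absurd rfl hi

end KL

/-- The capped ℓ₁-regularized least squares objective
`F(x) = μ‖Ax − b‖² + λ·Σᵢ min(|xᵢ|, θ)` satisfies the KL inequality with exponent
`1/2` around every local minimizer. -/
theorem cappedL1_LS_KL_exponent_half
    (m n : ℕ) (A : Matrix (Fin m) (Fin n) ℝ) (b : Fin m → ℝ)
    (μ lam θ : ℝ) (hμ : 0 < μ) (hlam : 0 < lam) (hθ : 0 < θ) :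
    let F : EuclideanSpace ℝ (Fin n) → ℝ :=
      fun x => μ * ∑ j, (A.mulVec x j - b j) ^ 2 + lam * ∑ i, min |x i| θ
    ∀ xbar : EuclideanSpace ℝ (Fin n), IsLocalMin F xbar →
      ∃ c > (0 : ℝ), ∃ ε > (0 : ℝ), ∃ η > (0 : ℝ),
        ∀ x : EuclideanSpace ℝ (Fin n),
          ‖x - xbar‖ < ε → F xbar < F x → F x < F xbar + η →
            ∀ ξ : EuclideanSpace ℝ (Fin n), IsFrechetSubgradient F x ξ →
              c * Real.sqrt (F x - F xbar) ≤ ‖ξ‖ := by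
  intro F xbar hmin
  obtain ⟨c, hc, hkl⟩ := exists_kl_bound_of_isLocalMin_cappedLS A b hμ hlam hθ hmin
  obtain ⟨ε, hε, hball⟩ := Metric.eventually_nhds_iff.mp hkl
  exact ⟨c, hc, ε, hε, 1, one_pos, fun x hx _ hF ξ hξ =>
    hball (by rwa [dist_eq_norm]) ξ hξ (sub_lt_iff_lt_add'.mpr hF)⟩
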